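/- For every n ≥ 0, D_n^−(x) equals the polynomial obtained from Q_n by substituting x−1 for x, i.e. D_n^−(x) = Q_n(x−1) in ℤ[x]; consequently, for every n ≥ 2 and k ≥ 0, the coefficient of x^k in D_n^−(x) equals C(n−k, k) + C(n−k−1, k−1), where C(a,b) is the binomial coefficient with the convention that C(a,b) = 0 when b < 0. -/
import Mathlib


open Polynomial

/-- The indegree sequence polynomials `Dm n` (written `D_n^-`) of the matchable Lucas cubes. -/
noncomputable def Dm : ℕ → Polynomial ℤ
  | 0 => 1
  | 1 => 1 + X
  | 2 => 1 + 2 * X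
  | 3 => 1 + 3 * X
  | (n + 4) => Dm (n + 3) + X * Dm (n + 2)

/-- The cube polynomials `Q n` of the matchable Lucas cubes. -/
noncomputable def Q : ℕ → Polynomial ℤ
  | 0 => 1
  | 1 => 2 + X
  | 2 => 3 + 2 * X
  | 3 => 4 + 3 * X
  | (n + 4) => Q (n + 3) + (1 + X) * Q (n + 2)

/-- Auxiliary abbreviation for the claimed coefficient value. -/
noncomputable def F (n k : ℕ) : ℤ :=
  ((n - k).choose k : ℤ) + (if k = 0 then 0 else ((n - k - 1).choose (k - 1) : ℤ))

lemma key (m j : ℕ) : F (m + 4) (j + 1) = F (m + 3) (j + 1) + F (m + 2) j := by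
  unfold F
  rcases j with _ | i
  · have e1 : m + 4 - 1 = m + 3 := by omega
    have e2 : m + 4 - 1 - 1 = m + 2 := by omega
    have e3 : m + 3 - 1 = m + 2 := by omega
    have e4 : m + 3 - 1 - 1 = m + 1 := by omega
    have e5 : m + 2 - 0 = m + 2 := by omega
    simp only [e1, e2, e3, e4, e5, if_neg one_ne_zero, if_pos rfl,
      Nat.choose_one_right, Nat.choose_zero_right]
    push_cast [Nat.choose_one_right, Nat.choose_zero_right]
    omega
  · have h4 : m + 4 - (i + 2) = m + 2 - i := by omega
    have h3 : m + 3 - (i + 2) = m + 1 - i := by omega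
    have h2 : m + 2 - (i + 1) = m + 1 - i := by omega
    simp only [h4, h3, h2, Nat.add_sub_cancel, if_neg (Nat.succ_ne_zero _),
      Nat.succ_sub_one]
    rcases le_or_gt i m with h | h
    · obtain ⟨t, rfl⟩ : ∃ t, m = i + t := ⟨m - i, by omega⟩
      have e1 : i + t + 2 - i = t + 2 := by omega
      have e2 : i + t + 1 - i = t + 1 := by omega
      have e3 : i + t - i = t := by omega
      have e4 : i + t + 1 - i - 1 = t := by omega
      simp only [e1, e2, e3, e4]
      have p1 : (t + 2).choose (i + 2) = (t + 1).choose (i + 1) + (t + 1).choose (i + 2) :=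
        Nat.choose_succ_succ _ _
      have p2 : (t + 1).choose (i + 1) = t.choose i + t.choose (i + 1) :=
        Nat.choose_succ_succ _ _
      push_cast [p1, p2]
      ring
    · have z1 : (m + 2 - i).choose (i + 2) = 0 :=
        Nat.choose_eq_zero_of_lt (by omega)
      have z2 : (m + 1 - i).choose (i + 1) = 0 :=
        Nat.choose_eq_zero_of_lt (by omega)
      have z3 : (m + 1 - i).choose (i + 2) = 0 :=
        Nat.choose_eq_zero_of_lt (by omega)
      have z4 : (m - i).choose (i + 1) = 0 :=
        Nat.choose_eq_zero_of_lt (by omega)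
      have z5 : (m + 1 - i - 1).choose i = 0 :=
        Nat.choose_eq_zero_of_lt (by omega)
      have z6 : (m + 2 - i - 1).choose (i + 1) = 0 :=
        Nat.choose_eq_zero_of_lt (by omega)
      have z7 : (m + 1 - i - 1).choose (i + 1) = 0 :=
        Nat.choose_eq_zero_of_lt (by omega)
      simp [z1, z2, z3, z4, z5, z6, z7]

lemma coeff_aux : ∀ n : ℕ, 2 ≤ n → ∀ k : ℕ, (Dm n).coeff k = F n k := by
  intro n
  induction n using Nat.strong_induction_on with
  | _ n ih =>
    match n with
    | 0 => intro h; omega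
    | 1 => intro h; omega
    | 2 =>
      intro _ k
      rcases k with _ | _ | k
      · simp [Dm, F]
      · simp [Dm, F, coeff_one, coeff_X]
      · have : (2 : ℕ) - (k + 2) = 0 := by omega
        simp [Dm, F, this, Nat.choose, coeff_one, coeff_X]
    | 3 =>
      intro _ k
      rcases k with _ | _ | k
      · simp [Dm, F]
      · simp [Dm, F, coeff_one, coeff_X]
      · have z1 : ((3 : ℕ) - (k + 2)).choose (k + 2) = 0 :=
          Nat.choose_eq_zero_of_lt (by omega)
        have z2 : ((3 : ℕ) - (k + 2) - 1).choose (k + 1) = 0 :=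
          Nat.choose_eq_zero_of_lt (by omega)
        have z3 : ((1 : ℕ) - k).choose (k + 2) = 0 :=
          Nat.choose_eq_zero_of_lt (by omega)
        have z4 : ((1 : ℕ) - k - 1).choose (k + 1) = 0 :=
          Nat.choose_eq_zero_of_lt (by omega)
        simp [Dm, F, z1, z2, z3, z4, coeff_one, coeff_X]
    | (m + 4) =>
      intro _ k
      have hrec : Dm (m + 4) = Dm (m + 3) + X * Dm (m + 2) := by rw [Dm]
      have ih3 := ih (m + 3) (by omega) (by omega)
      have ih2 := ih (m + 2) (by omega) (by omega)
      rcases k with _ | j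
      · simp [hrec, ih3 0, F]
      · rw [hrec, coeff_add, coeff_X_mul, ih3 (j + 1), ih2 j, key]

theorem Dm_eq_Q_comp_and_coeff :
    (∀ n : ℕ, Dm n = (Q n).comp (X - 1)) ∧
    (∀ n : ℕ, 2 ≤ n → ∀ k : ℕ,
      (Dm n).coeff k
        = ((n - k).choose k : ℤ)
          + (if k = 0 then 0 else ((n - k - 1).choose (k - 1) : ℤ))) := by
  constructor
  · intro n
    induction n using Nat.strong_induction_on with
    | _ n ih =>
      match n with
      | 0 => simp [Dm, Q]
      | 1 => simp [Dm, Q]; ring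
      | 2 => simp [Dm, Q]; ring
      | 3 => simp [Dm, Q]; ring
      | (m + 4) =>
        have ih3 := ih (m + 3) (by omega)
        have ih2 := ih (m + 2) (by omega)
        have h1 : Dm (m + 4) = Dm (m + 3) + X * Dm (m + 2) := by rw [Dm]
        have h2 : Q (m + 4) = Q (m + 3) + (1 + X) * Q (m + 2) := by rw [Q]
        rw [h1, h2, add_comp, mul_comp, add_comp, one_comp, X_comp, ih3, ih2]
        ring
  · exact coeff_aux
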